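/- Let ν be a finite nonnegative Borel measure on ℝ with ν ≠ 0 that is not concentrated at a single point. For μ ≥ 0 let T_μ be the integral operator on L²(ℝ, ν) defined by (T_μ f)(x) = ∫_ℝ e^{−μ|x−y|} f(y) ν(dy). Then the largest eigenvalue (operator norm) of T_μ is strictly decreasing: for 0 ≤ μ₂ < μ₁, sup{⟨f, T_{μ₁} f⟩ : ‖f‖_{L²(ν)} = 1} < sup{⟨f, T_{μ₂} f⟩ : ‖f‖_{L²(ν)} = 1}. -/

import Mathlib

open MeasureTheory Real

/-- The quadratic form `⟨f, T_μ f⟩ = ∬ f(x) e^{-μ|x-y|} f(y) ν(dx) ν(dy)` of the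
integral operator `T_μ` on `L²(ℝ, ν)` with kernel `e^{-μ|x-y|}`. -/
noncomputable def expKernelForm (ν : Measure ℝ) (μ : ℝ) (f : ℝ → ℝ) : ℝ :=
  ∫ x, (∫ y, Real.exp (-μ * |x - y|) * f y ∂ν) * f x ∂ν

/-- The largest eigenvalue of `T_μ` on `L²(ℝ, ν)`:
`sup { ⟨f, T_μ f⟩ : ‖f‖_{L²(ν)} = 1 }`. -/
noncomputable def expKernelTop (ν : Measure ℝ) (μ : ℝ) : ℝ :=
  sSup { r : ℝ | ∃ f : ℝ → ℝ, MemLp f 2 ν ∧ (∫ x, (f x) ^ 2 ∂ν) = 1 ∧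
    r = expKernelForm ν μ f }

namespace ExpKernelAux

open ENNReal Set Metric Filter

noncomputable section

/-- The exponential kernel, `ℝ≥0∞`-valued. -/
def kE (μ : ℝ) (x y : ℝ) : ℝ≥0∞ := ENNReal.ofReal (Real.exp (-μ * |x - y|))

/-- near-diagonal indicator kernel -/
def kNear (δ : ℝ) (x y : ℝ) : ℝ≥0∞ := if |x - y| < δ then 1 else 0

/-- mid-range indicator kernel -/
def kMid (δ R : ℝ) (x y : ℝ) : ℝ≥0∞ := if δ ≤ |x - y| ∧ |x - y| ≤ R then 1 else 0

/-- The bilinear form as an iterated lower Lebesgue integral. -/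
def lB (ν : Measure ℝ) (K : ℝ → ℝ → ℝ≥0∞) (F : ℝ → ℝ≥0∞) : ℝ≥0∞ :=
  ∫⁻ x, (∫⁻ y, K x y * F y ∂ν) * F x ∂ν

set_option linter.unusedSectionVars false

variable {ν : Measure ℝ} [IsFiniteMeasure ν]

lemma measurable_kE (μ : ℝ) : Measurable (Function.uncurry (kE μ)) := by
  apply Measurable.ennreal_ofReal
  fun_prop

lemma measurable_kNear (δ : ℝ) : Measurable (Function.uncurry (kNear δ)) := by
  have : MeasurableSet {p : ℝ × ℝ | |p.1 - p.2| < δ} :=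
    measurableSet_lt ((measurable_fst.sub measurable_snd).abs) measurable_const
  exact Measurable.ite this measurable_const measurable_const

lemma measurable_kMid (δ R : ℝ) : Measurable (Function.uncurry (kMid δ R)) := by
  have h1 : MeasurableSet {p : ℝ × ℝ | δ ≤ |p.1 - p.2| ∧ |p.1 - p.2| ≤ R} := by
    exact MeasurableSet.inter
      (measurableSet_le measurable_const ((measurable_fst.sub measurable_snd).abs))
      (measurableSet_le ((measurable_fst.sub measurable_snd).abs) measurable_const)
  exact Measurable.ite h1 measurable_const measurable_const

lemma kE_le_one {μ : ℝ} (hμ : 0 ≤ μ) (x y : ℝ) : kE μ x y ≤ 1 := by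
  rw [kE, show (1:ℝ≥0∞) = ENNReal.ofReal 1 by simp]
  apply ENNReal.ofReal_le_ofReal
  calc Real.exp (-μ * |x - y|) ≤ Real.exp 0 := by
        apply Real.exp_le_exp.mpr
        have : 0 ≤ μ * |x - y| := mul_nonneg hμ (abs_nonneg _)
        linarith
    _ = 1 := Real.exp_zero

lemma kNear_le_one (δ x y : ℝ) : kNear δ x y ≤ 1 := by
  rw [kNear]; split <;> simp

lemma kMid_le_one (δ R x y : ℝ) : kMid δ R x y ≤ 1 := by
  rw [kMid]; split <;> simp

lemma lB_mono_K {K K' : ℝ → ℝ → ℝ≥0∞} (h : ∀ x y, K x y ≤ K' x y) (F : ℝ → ℝ≥0∞) :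
    lB ν K F ≤ lB ν K' F := by
  apply lintegral_mono
  intro x
  exact mul_le_mul_left (lintegral_mono fun y => mul_le_mul_left (h x y) _) _

lemma lB_le {K : ℝ → ℝ → ℝ≥0∞} {C : ℝ≥0∞} (hC : C ≠ ∞) (h : ∀ x y, K x y ≤ C)
    {F : ℝ → ℝ≥0∞} (hL : ∫⁻ x, F x ∂ν ≠ ∞) :
    lB ν K F ≤ C * (∫⁻ x, F x ∂ν) * (∫⁻ x, F x ∂ν) := by
  calc lB ν K F ≤ ∫⁻ x, (∫⁻ y, C * F y ∂ν) * F x ∂ν := by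
        apply lintegral_mono
        intro x
        exact mul_le_mul_left (lintegral_mono fun y => mul_le_mul_left (h x y) _) _
    _ = (C * ∫⁻ y, F y ∂ν) * ∫⁻ x, F x ∂ν := by
        simp_rw [lintegral_const_mul' C _ hC]
        rw [lintegral_const_mul' _ _ (ENNReal.mul_ne_top hC hL)]

lemma lB_add {K K' : ℝ → ℝ → ℝ≥0∞} (hK : Measurable (Function.uncurry K))
    (hK' : Measurable (Function.uncurry K')) {F : ℝ → ℝ≥0∞} (hF : Measurable F) :
    lB ν (fun x y => K x y + K' x y) F = lB ν K F + lB ν K' F := by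
  have m1 : Measurable fun x => ∫⁻ y, K x y * F y ∂ν :=
    Measurable.lintegral_prod_right' (f := fun p => K p.1 p.2 * F p.2)
      (hK.mul (hF.comp measurable_snd))
  have m2 : Measurable fun x => ∫⁻ y, K' x y * F y ∂ν :=
    Measurable.lintegral_prod_right' (f := fun p => K' p.1 p.2 * F p.2)
      (hK'.mul (hF.comp measurable_snd))
  rw [lB, lB, lB]
  have : ∀ x, (∫⁻ y, (K x y + K' x y) * F y ∂ν)
      = (∫⁻ y, K x y * F y ∂ν) + ∫⁻ y, K' x y * F y ∂ν := by
    intro x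
    simp_rw [add_mul]
    exact lintegral_add_left ((hK.comp measurable_prodMk_left).mul hF) _
  simp_rw [this, add_mul]
  exact lintegral_add_left (m1.mul hF) _

lemma lB_smul {K : ℝ → ℝ → ℝ≥0∞} {c : ℝ≥0∞} (hc : c ≠ ∞) (F : ℝ → ℝ≥0∞) :
    lB ν (fun x y => c * K x y) F = c * lB ν K F := by
  rw [lB, lB]
  have h1 : ∀ x, (∫⁻ y, (c * K x y) * F y ∂ν) = c * ∫⁻ y, K x y * F y ∂ν := by
    intro x; simp_rw [mul_assoc]; exact lintegral_const_mul' c _ hc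
  simp_rw [h1, mul_assoc]
  exact lintegral_const_mul' c _ hc

lemma lB_const {c : ℝ≥0∞} (hc : c ≠ ∞) {F : ℝ → ℝ≥0∞}
    (hL : ∫⁻ x, F x ∂ν ≠ ∞) :
    lB ν (fun _ _ => c) F = c * (∫⁻ x, F x ∂ν) * (∫⁻ x, F x ∂ν) := by
  rw [lB]
  simp_rw [lintegral_const_mul' c _ hc]
  rw [lintegral_const_mul' _ _ (by exact ENNReal.mul_ne_top hc hL)]

lemma L1_ne_top {g : ℝ → ℝ} (h0 : ∀ x, 0 ≤ g x) (hg : Integrable g ν) :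
    ∫⁻ x, ENNReal.ofReal (g x) ∂ν ≠ ∞ := by
  have h := hg.hasFiniteIntegral
  have h2 : ∫⁻ x, (‖g x‖₊ : ℝ≥0∞) ∂ν < ∞ := h
  have heq : ∀ x, ENNReal.ofReal (g x) = (‖g x‖₊ : ℝ≥0∞) := fun x => by
    rw [← enorm_eq_nnnorm, ← ofReal_norm, Real.norm_eq_abs, abs_of_nonneg (h0 x)]
  simp_rw [heq]
  exact h2.ne

lemma integrable_sq {g : ℝ → ℝ} (hg : MemLp g 2 ν) :
    Integrable (fun x => (g x)^2) ν := by
  have h := hg.integrable_norm_rpow (by norm_num) (by norm_num)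
  refine h.congr (Filter.Eventually.of_forall fun x => ?_)
  show ‖g x‖ ^ (2:ℝ≥0∞).toReal = g x ^ 2
  rw [ENNReal.toReal_ofNat, Real.norm_eq_abs, show ((2:ℝ)) = ((2:ℕ):ℝ) by norm_num,
    Real.rpow_natCast, sq_abs]

lemma lint_sq {g : ℝ → ℝ} (hg : Measurable g) (h0 : ∀ x, 0 ≤ g x) (hg2 : MemLp g 2 ν)
    (h1 : ∫ x, (g x)^2 ∂ν = 1) :
    ∫⁻ x, (ENNReal.ofReal (g x))^2 ∂ν = 1 := by
  have hi : Integrable (fun x => (g x)^2) ν := integrable_sq hg2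
  have heq : ∫ x, (g x)^2 ∂ν = (∫⁻ x, ENNReal.ofReal ((g x)^2) ∂ν).toReal :=
    integral_eq_lintegral_of_nonneg_ae (Filter.Eventually.of_forall fun x => sq_nonneg _)
      (hg.pow_const 2).aestronglyMeasurable
  have hfin : ∫⁻ x, ENNReal.ofReal ((g x)^2) ∂ν ≠ ∞ := L1_ne_top (fun x => sq_nonneg _) hi
  have hval : (∫⁻ x, ENNReal.ofReal ((g x)^2) ∂ν) = ENNReal.ofReal 1 := by
    rw [← h1, heq, ENNReal.ofReal_toReal hfin]
  simp_rw [← ENNReal.ofReal_pow (h0 _)]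
  rw [hval]; simp

lemma lint_le_add_one {F : ℝ → ℝ≥0∞} (_hF : Measurable F)
    (hF2 : ∫⁻ x, (F x)^2 ∂ν = 1) :
    ∫⁻ x, F x ∂ν ≤ 1 + ν Set.univ := by
  have h : ∀ x, F x ≤ (F x)^2 + 1 := by
    intro x
    rcases le_total (F x) 1 with h | h
    · exact h.trans le_add_self
    · calc F x = F x * 1 := (mul_one _).symm
        _ ≤ F x * F x := mul_le_mul_right h _
        _ = (F x)^2 := (sq (F x)).symm
        _ ≤ (F x)^2 + 1 := le_self_add
  calc ∫⁻ x, F x ∂ν ≤ ∫⁻ x, ((F x)^2 + 1) ∂ν := lintegral_mono h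
    _ = 1 + ν Set.univ := by
        rw [lintegral_add_right _ measurable_const, hF2, lintegral_const, one_mul]

lemma ofReal_form_aux {μ : ℝ} (hμ : 0 ≤ μ) {g : ℝ → ℝ} (hg : Measurable g)
    (h0 : ∀ x, 0 ≤ g x) (hL1 : ∫⁻ x, ENNReal.ofReal (g x) ∂ν ≠ ∞) :
    (∀ x, (∫ y, Real.exp (-μ * |x - y|) * g y ∂ν)
        = (∫⁻ y, kE μ x y * ENNReal.ofReal (g y) ∂ν).toReal)
    ∧ (∀ x, (∫⁻ y, kE μ x y * ENNReal.ofReal (g y) ∂ν) ≠ ∞) := by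
  constructor
  · intro x
    have hmeas : Measurable fun y : ℝ => Real.exp (-μ * |x - y|) * g y := by
      apply Measurable.mul ?_ hg
      exact Real.measurable_exp.comp (((measurable_const.sub measurable_id).abs).const_mul (-μ))
    rw [integral_eq_lintegral_of_nonneg_ae
      (Filter.Eventually.of_forall fun y => mul_nonneg (Real.exp_nonneg _) (h0 y))
      hmeas.aestronglyMeasurable]
    congr 1
    apply lintegral_congr
    intro y
    rw [ENNReal.ofReal_mul (Real.exp_nonneg _)]
    rfl
  · intro x
    refine ne_top_of_le_ne_top hL1 ?_
    calc ∫⁻ y, kE μ x y * ENNReal.ofReal (g y) ∂ν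
        ≤ ∫⁻ y, 1 * ENNReal.ofReal (g y) ∂ν :=
          lintegral_mono fun y => mul_le_mul_left (kE_le_one hμ x y) _
      _ = _ := by simp

lemma measurable_I {μ : ℝ} {g : ℝ → ℝ} (hg : Measurable g) :
    Measurable (fun x => ∫⁻ y, kE μ x y * ENNReal.ofReal (g y) ∂ν) := by
  apply Measurable.lintegral_prod_right' (f := fun p : ℝ × ℝ => kE μ p.1 p.2 * ENNReal.ofReal (g p.2))
  exact (measurable_kE μ).mul ((measurable_ofReal.comp hg).comp measurable_snd)

lemma form_eq {μ : ℝ} (hμ : 0 ≤ μ) {g : ℝ → ℝ} (hg : Measurable g)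
    (h0 : ∀ x, 0 ≤ g x) (hL1 : ∫⁻ x, ENNReal.ofReal (g x) ∂ν ≠ ∞) :
    expKernelForm ν μ g = (lB ν (kE μ) (fun x => ENNReal.ofReal (g x))).toReal := by
  obtain ⟨hinner, hfin⟩ := ofReal_form_aux hμ hg h0 hL1
  have hImeas : Measurable (fun x => ∫⁻ y, kE μ x y * ENNReal.ofReal (g y) ∂ν) :=
    measurable_I hg
  rw [expKernelForm]
  have h1 : ∫ x, (∫ y, Real.exp (-μ*|x-y|) * g y ∂ν) * g x ∂ν
      = ∫ x, (∫⁻ y, kE μ x y * ENNReal.ofReal (g y) ∂ν).toReal * g x ∂ν := by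
    apply integral_congr_ae
    filter_upwards with x
    rw [hinner x]
  rw [h1, integral_eq_lintegral_of_nonneg_ae
    (Filter.Eventually.of_forall fun x => mul_nonneg ENNReal.toReal_nonneg (h0 x))
    (hImeas.ennreal_toReal.mul hg).aestronglyMeasurable]
  congr 1
  apply lintegral_congr
  intro x
  rw [ENNReal.ofReal_mul ENNReal.toReal_nonneg, ENNReal.ofReal_toReal (hfin x)]

lemma integrable_form {μ : ℝ} (hμ : 0 ≤ μ) {g : ℝ → ℝ} (hg : Measurable g)
    (h0 : ∀ x, 0 ≤ g x) (hL1 : ∫⁻ x, ENNReal.ofReal (g x) ∂ν ≠ ∞) :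
    Integrable (fun x => (∫ y, Real.exp (-μ * |x - y|) * g y ∂ν) * g x) ν := by
  obtain ⟨hinner, hfin⟩ := ofReal_form_aux hμ hg h0 hL1
  have hImeas : Measurable (fun x => ∫⁻ y, kE μ x y * ENNReal.ofReal (g y) ∂ν) :=
    measurable_I hg
  have hrw : (fun x => (∫ y, Real.exp (-μ * |x - y|) * g y ∂ν) * g x)
      = fun x => (∫⁻ y, kE μ x y * ENNReal.ofReal (g y) ∂ν).toReal * g x :=
    funext fun x => by rw [hinner x]
  rw [hrw]
  refine ⟨(hImeas.ennreal_toReal.mul hg).aestronglyMeasurable, ?_⟩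
  have hnn : ∀ x, ((‖(∫⁻ y, kE μ x y * ENNReal.ofReal (g y) ∂ν).toReal * g x‖₊ : ℝ≥0∞))
      = (∫⁻ y, kE μ x y * ENNReal.ofReal (g y) ∂ν) * ENNReal.ofReal (g x) := fun x => by
    rw [← enorm_eq_nnnorm, ← ofReal_norm, Real.norm_eq_abs,
      abs_of_nonneg (mul_nonneg ENNReal.toReal_nonneg (h0 x)),
      ENNReal.ofReal_mul ENNReal.toReal_nonneg, ENNReal.ofReal_toReal (hfin x)]
  have hHFI : ∫⁻ x, (‖(∫⁻ y, kE μ x y * ENNReal.ofReal (g y) ∂ν).toReal * g x‖₊ : ℝ≥0∞) ∂ν < ∞ := by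
    simp_rw [hnn]
    refine lt_of_le_of_lt (lB_le one_ne_top (kE_le_one hμ) hL1) ?_
    rw [one_mul]
    exact ENNReal.mul_lt_top hL1.lt_top hL1.lt_top
  exact hHFI

lemma form_congr_ae {μ : ℝ} {f g : ℝ → ℝ} (h : f =ᵐ[ν] g) :
    expKernelForm ν μ f = expKernelForm ν μ g := by
  rw [expKernelForm, expKernelForm]
  have hin : ∀ x, (∫ y, Real.exp (-μ*|x-y|) * f y ∂ν) = ∫ y, Real.exp (-μ*|x-y|) * g y ∂ν := by
    intro x
    apply integral_congr_ae
    filter_upwards [h] with y hy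
    rw [hy]
  apply integral_congr_ae
  filter_upwards [h] with x hx
  rw [hin x, hx]

lemma form_le_abs {μ : ℝ} (hμ : 0 ≤ μ) {f : ℝ → ℝ} (hf : Measurable f)
    (hf2 : MemLp f 2 ν) :
    expKernelForm ν μ f ≤ expKernelForm ν μ (fun x => |f x|) := by
  have habs : Measurable fun x => |f x| := hf.abs
  have hL1 : ∫⁻ x, ENNReal.ofReal (|f x|) ∂ν ≠ ∞ :=
    L1_ne_top (fun x => abs_nonneg _) (hf2.integrable one_le_two).abs
  have hint : Integrable (fun x => (∫ y, Real.exp (-μ*|x-y|) * |f y| ∂ν) * |f x|) ν :=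
    integrable_form hμ habs (fun x => abs_nonneg _) hL1
  have key : ∀ x, |(∫ y, Real.exp (-μ*|x-y|) * f y ∂ν) * f x|
      ≤ (∫ y, Real.exp (-μ*|x-y|) * |f y| ∂ν) * |f x| := by
    intro x
    rw [abs_mul]
    apply mul_le_mul_of_nonneg_right _ (abs_nonneg _)
    calc |∫ y, Real.exp (-μ*|x-y|) * f y ∂ν| ≤ ∫ y, |Real.exp (-μ*|x-y|) * f y| ∂ν := by
          have h1 := norm_integral_le_integral_norm (μ := ν)
            fun y => Real.exp (-μ*|x-y|) * f y
          simp only [Real.norm_eq_abs] at h1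
          exact h1
      _ = ∫ y, Real.exp (-μ*|x-y|) * |f y| ∂ν := by
          apply integral_congr_ae
          filter_upwards with y
          rw [abs_mul, abs_of_nonneg (Real.exp_nonneg _)]
  calc expKernelForm ν μ f ≤ |expKernelForm ν μ f| := le_abs_self _
    _ ≤ ∫ x, |(∫ y, Real.exp (-μ*|x-y|) * f y ∂ν) * f x| ∂ν := by
        rw [expKernelForm]
        have h1 := norm_integral_le_integral_norm (μ := ν)
          fun x => (∫ y, Real.exp (-μ*|x-y|) * f y ∂ν) * f x
        simp only [Real.norm_eq_abs] at h1
        exact h1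
    _ ≤ ∫ x, (∫ y, Real.exp (-μ*|x-y|) * |f y| ∂ν) * |f x| ∂ν :=
        integral_mono_of_nonneg (Filter.Eventually.of_forall fun x => abs_nonneg _) hint
          (Filter.Eventually.of_forall key)
    _ = expKernelForm ν μ (fun x => |f x|) := rfl

lemma lB_ne_top {μ : ℝ} (hμ : 0 ≤ μ) {F : ℝ → ℝ≥0∞} (hL1 : ∫⁻ x, F x ∂ν ≠ ∞) :
    lB ν (kE μ) F ≠ ∞ := by
  refine ne_top_of_le_ne_top ?_ (lB_le one_ne_top (kE_le_one hμ) hL1)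
  rw [one_mul]
  exact ENNReal.mul_ne_top hL1 hL1

lemma form_mono_mu {μ μ' : ℝ} (hμ' : 0 ≤ μ') (hle : μ' ≤ μ) {g : ℝ → ℝ}
    (hg : Measurable g) (h0 : ∀ x, 0 ≤ g x)
    (hL1 : ∫⁻ x, ENNReal.ofReal (g x) ∂ν ≠ ∞) :
    expKernelForm ν μ g ≤ expKernelForm ν μ' g := by
  rw [form_eq (hμ'.trans hle) hg h0 hL1, form_eq hμ' hg h0 hL1]
  apply ENNReal.toReal_mono (lB_ne_top hμ' hL1)
  apply lB_mono_K
  intro x y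
  apply ENNReal.ofReal_le_ofReal
  apply Real.exp_le_exp.mpr
  have : 0 ≤ |x - y| := abs_nonneg _
  nlinarith

lemma goodify {f : ℝ → ℝ} (hf : MemLp f 2 ν) (h2 : (∫ x, (f x)^2 ∂ν) = 1) :
    ∃ g : ℝ → ℝ, Measurable g ∧ (∀ x, 0 ≤ g x) ∧ MemLp g 2 ν ∧ (∫ x, (g x)^2 ∂ν) = 1 ∧
      (∫⁻ x, ENNReal.ofReal (g x) ∂ν ≠ ∞) ∧
      ∀ μ : ℝ, 0 ≤ μ → expKernelForm ν μ f ≤ expKernelForm ν μ g := by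
  have hm := hf.1
  have heq : f =ᵐ[ν] hm.mk f := hm.ae_eq_mk
  have hf'meas : Measurable (hm.mk f) := hm.stronglyMeasurable_mk.measurable
  have hf'2 : MemLp (hm.mk f) 2 ν := (memLp_congr_ae heq).mp hf
  have habs2 : MemLp (fun x => |hm.mk f x|) 2 ν := by
    have := hf'2.norm
    simpa [Real.norm_eq_abs] using this
  have hsq : (∫ x, (|hm.mk f x|)^2 ∂ν) = 1 := by
    simp_rw [sq_abs]
    rw [← h2]
    apply integral_congr_ae
    filter_upwards [heq] with x hx
    rw [hx]
  refine ⟨fun x => |hm.mk f x|, hf'meas.abs, fun x => abs_nonneg _, habs2, hsq,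
    L1_ne_top (fun x => abs_nonneg _) (hf'2.integrable one_le_two).abs, ?_⟩
  intro μ hμ
  calc expKernelForm ν μ f = expKernelForm ν μ (hm.mk f) := form_congr_ae heq
    _ ≤ _ := form_le_abs hμ hf'meas hf'2

lemma bddAbove_topSet (μ : ℝ) (hμ : 0 ≤ μ) :
    BddAbove { r : ℝ | ∃ f : ℝ → ℝ, MemLp f 2 ν ∧ (∫ x, (f x) ^ 2 ∂ν) = 1 ∧
      r = expKernelForm ν μ f } := by
  refine ⟨(((1 : ℝ≥0∞) + ν Set.univ) * ((1:ℝ≥0∞) + ν Set.univ)).toReal, ?_⟩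
  rintro r ⟨f, hf, h2, rfl⟩
  obtain ⟨g, hgm, hg0, hg2, hgint, hgL1, hgle⟩ := goodify hf h2
  have hL1le : ∫⁻ x, ENNReal.ofReal (g x) ∂ν ≤ 1 + ν Set.univ :=
    lint_le_add_one (measurable_ofReal.comp hgm) (lint_sq hgm hg0 hg2 hgint)
  calc expKernelForm ν μ f ≤ expKernelForm ν μ g := hgle μ hμ
    _ = (lB ν (kE μ) (fun x => ENNReal.ofReal (g x))).toReal := form_eq hμ hgm hg0 hgL1
    _ ≤ _ := by
      apply ENNReal.toReal_mono
      · exact ENNReal.mul_ne_top (ENNReal.add_ne_top.mpr ⟨one_ne_top, measure_ne_top ν _⟩)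
          (ENNReal.add_ne_top.mpr ⟨one_ne_top, measure_ne_top ν _⟩)
      · calc lB ν (kE μ) (fun x => ENNReal.ofReal (g x))
            ≤ 1 * (∫⁻ x, ENNReal.ofReal (g x) ∂ν) * (∫⁻ x, ENNReal.ofReal (g x) ∂ν) :=
              lB_le one_ne_top (kE_le_one hμ) hgL1
          _ ≤ _ := by
              rw [one_mul]
              exact mul_le_mul' hL1le hL1le


lemma two_mul_le_sq_add {a b : ℝ≥0∞} (ha : a ≠ ∞) (hb : b ≠ ∞) :
    2 * (a * b) ≤ a^2 + b^2 := by
  lift a to NNReal using ha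
  lift b to NNReal using hb
  rw [← ENNReal.coe_mul, ← ENNReal.coe_pow, ← ENNReal.coe_pow, ← ENNReal.coe_add,
    show ((2:ℝ≥0∞)) = ((2:NNReal):ℝ≥0∞) by norm_num, ← ENNReal.coe_mul, ENNReal.coe_le_coe,
    ← NNReal.coe_le_coe]
  push_cast
  nlinarith [sq_nonneg ((a:ℝ) - (b:ℝ))]

lemma lintegral_kNear_right (δ : ℝ) (x : ℝ) : ∫⁻ y, kNear δ x y ∂ν = ν (ball x δ) := by
  have h : ∀ y, kNear δ x y = (ball x δ).indicator (fun _ => (1:ℝ≥0∞)) y := by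
    intro y
    have hmem : y ∈ ball x δ ↔ |x - y| < δ := by
      rw [mem_ball, Real.dist_eq, abs_sub_comm]
    rw [kNear]
    by_cases hy : |x - y| < δ
    · rw [if_pos hy, Set.indicator_of_mem (hmem.mpr hy)]
    · rw [if_neg hy, Set.indicator_of_notMem (fun hc => hy (hmem.mp hc))]
  simp_rw [h]
  rw [lintegral_indicator_const measurableSet_ball, one_mul]

lemma lintegral_kNear_left (δ : ℝ) (y : ℝ) : ∫⁻ x, kNear δ x y ∂ν = ν (ball y δ) := by
  have h : ∀ x, kNear δ x y = (ball y δ).indicator (fun _ => (1:ℝ≥0∞)) x := by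
    intro x
    have hmem : x ∈ ball y δ ↔ |x - y| < δ := by
      rw [mem_ball, Real.dist_eq]
    rw [kNear]
    by_cases hy : |x - y| < δ
    · rw [if_pos hy, Set.indicator_of_mem (hmem.mpr hy)]
    · rw [if_neg hy, Set.indicator_of_notMem (fun hc => hy (hmem.mp hc))]
  simp_rw [h]
  rw [lintegral_indicator_const measurableSet_ball, one_mul]

lemma schur {δ : ℝ} {F : ℝ → ℝ≥0∞} (hF : Measurable F) (hfin : ∀ x, F x ≠ ∞)
    (hF2 : ∫⁻ x, (F x)^2 ∂ν = 1) :
    lB ν (kNear δ) F ≤ ⨆ x : ℝ, ν (ball x δ) := by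
  set S := ⨆ x : ℝ, ν (ball x δ) with hS
  have hSfin : S ≠ ∞ := by
    refine ne_top_of_le_ne_top (measure_ne_top ν Set.univ) ?_
    exact iSup_le fun x => measure_mono (Set.subset_univ _)
  have h2top : (2:ℝ≥0∞) ≠ ∞ := by norm_num
  have hpush : lB ν (kNear δ) F = ∫⁻ x, ∫⁻ y, kNear δ x y * F y * F x ∂ν ∂ν := by
    rw [lB]
    apply lintegral_congr
    intro x
    rw [lintegral_mul_const' _ _ (hfin x)]
  have e1 : 2 * lB ν (kNear δ) F = ∫⁻ x, ∫⁻ y, 2 * (kNear δ x y * F y * F x) ∂ν ∂ν := by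
    rw [hpush, ← lintegral_const_mul' 2 _ h2top]
    apply lintegral_congr
    intro x
    rw [← lintegral_const_mul' 2 _ h2top]
  have e2 : ∀ x y, 2 * (kNear δ x y * F y * F x)
      ≤ kNear δ x y * (F x)^2 + kNear δ x y * (F y)^2 := by
    intro x y
    calc 2 * (kNear δ x y * F y * F x) = kNear δ x y * (2 * ((F x) * (F y))) := by ring
      _ ≤ kNear δ x y * ((F x)^2 + (F y)^2) :=
          mul_le_mul_right (two_mul_le_sq_add (hfin x) (hfin y)) _
      _ = _ := mul_add _ _ _
  have m1 : Measurable fun x => ∫⁻ y, kNear δ x y * (F x)^2 ∂ν :=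
    Measurable.lintegral_prod_right' (f := fun p : ℝ × ℝ => kNear δ p.1 p.2 * (F p.1)^2)
      ((measurable_kNear δ).mul ((hF.comp measurable_fst).pow_const 2))
  have msplit : (∫⁻ x, ∫⁻ y, (kNear δ x y * (F x)^2 + kNear δ x y * (F y)^2) ∂ν ∂ν)
      = (∫⁻ x, ∫⁻ y, kNear δ x y * (F x)^2 ∂ν ∂ν)
        + ∫⁻ x, ∫⁻ y, kNear δ x y * (F y)^2 ∂ν ∂ν := by
    have hin : ∀ x, (∫⁻ y, (kNear δ x y * (F x)^2 + kNear δ x y * (F y)^2) ∂ν)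
        = (∫⁻ y, kNear δ x y * (F x)^2 ∂ν) + ∫⁻ y, kNear δ x y * (F y)^2 ∂ν := by
      intro x
      exact lintegral_add_left
        ((((measurable_kNear δ).comp measurable_prodMk_left)).mul measurable_const) _
    simp_rw [hin]
    exact lintegral_add_left m1 _
  have hT1 : (∫⁻ x, ∫⁻ y, kNear δ x y * (F x)^2 ∂ν ∂ν) ≤ S := by
    have heq : ∀ x, (∫⁻ y, kNear δ x y * (F x)^2 ∂ν) = ν (ball x δ) * (F x)^2 := by
      intro x
      rw [lintegral_mul_const' _ _ (ENNReal.pow_ne_top (hfin x)), lintegral_kNear_right]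
    calc (∫⁻ x, ∫⁻ y, kNear δ x y * (F x)^2 ∂ν ∂ν) = ∫⁻ x, ν (ball x δ) * (F x)^2 ∂ν :=
          lintegral_congr heq
      _ ≤ ∫⁻ x, S * (F x)^2 ∂ν :=
          lintegral_mono fun x => mul_le_mul_left (le_iSup (fun z => ν (ball z δ)) x) _
      _ = S * ∫⁻ x, (F x)^2 ∂ν := lintegral_const_mul' S _ hSfin
      _ = S := by rw [hF2, mul_one]
  have hT2 : (∫⁻ x, ∫⁻ y, kNear δ x y * (F y)^2 ∂ν ∂ν) ≤ S := by
    have hswap : (∫⁻ x, ∫⁻ y, kNear δ x y * (F y)^2 ∂ν ∂ν)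
        = ∫⁻ y, ∫⁻ x, kNear δ x y * (F y)^2 ∂ν ∂ν :=
      lintegral_lintegral_swap
        (((measurable_kNear δ).mul ((hF.comp measurable_snd).pow_const 2)).aemeasurable)
    have heq : ∀ y, (∫⁻ x, kNear δ x y * (F y)^2 ∂ν) = ν (ball y δ) * (F y)^2 := by
      intro y
      rw [lintegral_mul_const' _ _ (ENNReal.pow_ne_top (hfin y)), lintegral_kNear_left]
    calc (∫⁻ x, ∫⁻ y, kNear δ x y * (F y)^2 ∂ν ∂ν)
        = ∫⁻ y, ν (ball y δ) * (F y)^2 ∂ν := by rw [hswap]; exact lintegral_congr heq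
      _ ≤ ∫⁻ y, S * (F y)^2 ∂ν :=
          lintegral_mono fun y => mul_le_mul_left (le_iSup (fun z => ν (ball z δ)) y) _
      _ = S * ∫⁻ y, (F y)^2 ∂ν := lintegral_const_mul' S _ hSfin
      _ = S := by rw [hF2, mul_one]
  have key : 2 * lB ν (kNear δ) F ≤ 2 * S := by
    calc 2 * lB ν (kNear δ) F
        = ∫⁻ x, ∫⁻ y, 2 * (kNear δ x y * F y * F x) ∂ν ∂ν := e1
      _ ≤ ∫⁻ x, ∫⁻ y, (kNear δ x y * (F x)^2 + kNear δ x y * (F y)^2) ∂ν ∂ν :=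
          lintegral_mono fun x => lintegral_mono fun y => e2 x y
      _ = (∫⁻ x, ∫⁻ y, kNear δ x y * (F x)^2 ∂ν ∂ν)
            + ∫⁻ x, ∫⁻ y, kNear δ x y * (F y)^2 ∂ν ∂ν := msplit
      _ ≤ S + S := add_le_add hT1 hT2
      _ = 2 * S := (two_mul S).symm
  exact (ENNReal.mul_le_mul_iff_right (by norm_num) h2top).mp key

lemma kernel_decomp {μ δ R : ℝ} (hμ : 0 ≤ μ) (x y : ℝ) :
    kE μ x y ≤ kNear δ x y + kMid δ R x y + ENNReal.ofReal (Real.exp (-μ * R)) := by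
  by_cases h1 : |x - y| < δ
  · calc kE μ x y ≤ 1 := kE_le_one hμ x y
      _ ≤ _ := by
        rw [kNear, if_pos h1]
        exact le_add_of_le_of_nonneg (le_add_of_le_of_nonneg le_rfl (zero_le)) (zero_le)
  · by_cases h2 : |x - y| ≤ R
    · have hmid : kMid δ R x y = 1 := by
        rw [kMid, if_pos ⟨not_lt.mp h1, h2⟩]
      calc kE μ x y ≤ 1 := kE_le_one hμ x y
        _ ≤ _ := by
          rw [hmid]
          exact le_add_of_le_of_nonneg (le_add_of_nonneg_of_le (zero_le) le_rfl) (zero_le)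
    · have hfar : kE μ x y ≤ ENNReal.ofReal (Real.exp (-μ * R)) := by
        apply ENNReal.ofReal_le_ofReal
        apply Real.exp_le_exp.mpr
        have h3 : R < |x - y| := not_le.mp h2
        nlinarith
      exact hfar.trans (le_add_of_nonneg_of_le (zero_le) le_rfl)

lemma kernel_gain {μ₁ μ₂ δ R : ℝ} (hδ0 : 0 ≤ δ) (hμ₂ : 0 ≤ μ₂) (hμ : μ₂ < μ₁) (x y : ℝ) :
    kE μ₁ x y
      + ENNReal.ofReal (Real.exp (-μ₂ * R) * (1 - Real.exp (-(μ₁ - μ₂) * δ))) * kMid δ R x y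
      ≤ kE μ₂ x y := by
  have hcnn : 0 ≤ 1 - Real.exp (-(μ₁ - μ₂) * δ) := by
    have : Real.exp (-(μ₁ - μ₂) * δ) ≤ 1 := by
      rw [show (1:ℝ) = Real.exp 0 from Real.exp_zero.symm]
      apply Real.exp_le_exp.mpr
      nlinarith
    linarith
  rw [kMid]
  split_ifs with h
  · obtain ⟨hδ, hR⟩ := h
    set r := |x - y| with hr
    rw [mul_one, kE, kE, ← hr, ← ENNReal.ofReal_add (Real.exp_nonneg _)
      (mul_nonneg (Real.exp_nonneg _) hcnn)]
    apply ENNReal.ofReal_le_ofReal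
    have e1 : Real.exp (-μ₂ * R) ≤ Real.exp (-μ₂ * r) := by
      apply Real.exp_le_exp.mpr; nlinarith
    have e2 : 1 - Real.exp (-(μ₁ - μ₂) * δ) ≤ 1 - Real.exp (-(μ₁ - μ₂) * r) := by
      have : Real.exp (-(μ₁ - μ₂) * r) ≤ Real.exp (-(μ₁ - μ₂) * δ) := by
        apply Real.exp_le_exp.mpr; nlinarith
      linarith
    have key : Real.exp (-μ₂ * R) * (1 - Real.exp (-(μ₁ - μ₂) * δ))
        ≤ Real.exp (-μ₂ * r) * (1 - Real.exp (-(μ₁ - μ₂) * r)) :=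
      mul_le_mul e1 e2 hcnn (Real.exp_nonneg _)
    have expand : Real.exp (-μ₂ * r) * (1 - Real.exp (-(μ₁ - μ₂) * r))
        = Real.exp (-μ₂ * r) - Real.exp (-μ₁ * r) := by
      have harg : -μ₂ * r + -(μ₁ - μ₂) * r = -μ₁ * r := by ring
      rw [mul_sub, mul_one, ← Real.exp_add, harg]
    linarith
  · rw [mul_zero, add_zero, kE, kE]
    apply ENNReal.ofReal_le_ofReal
    apply Real.exp_le_exp.mpr
    have := abs_nonneg (x - y)
    nlinarith


lemma indicator_pair_memLp {s A : Set ℝ} (hs : MeasurableSet s) (hA : MeasurableSet A)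
    (hdisj : Disjoint s A) {α β : ℝ} (hα : 0 ≤ α) (hβ : 0 ≤ β) :
    MemLp (fun x => Set.indicator s (fun _ => α) x + Set.indicator A (fun _ => β) x) 2 ν := by
  apply MemLp.of_bound
    (((measurable_const.indicator hs).add (measurable_const.indicator hA)).aestronglyMeasurable)
    (α + β)
  filter_upwards with x
  rw [Real.norm_eq_abs]
  by_cases hxs : x ∈ s
  · have hxA : x ∉ A := Set.disjoint_left.mp hdisj hxs
    simp only [Pi.add_apply, Set.indicator_of_mem hxs, Set.indicator_of_notMem hxA, add_zero]
    rw [abs_of_nonneg hα]; linarith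
  · by_cases hxA : x ∈ A
    · simp only [Pi.add_apply, Set.indicator_of_mem hxA, Set.indicator_of_notMem hxs, zero_add]
      rw [abs_of_nonneg hβ]; linarith
    · simp only [Pi.add_apply, Set.indicator_of_notMem hxA, Set.indicator_of_notMem hxs, add_zero]
      rw [abs_zero]; linarith

lemma indicator_pair_sq_integral {s A : Set ℝ} (hs : MeasurableSet s) (hA : MeasurableSet A)
    (hdisj : Disjoint s A) (α β : ℝ) :
    (∫ x, (Set.indicator s (fun _ => α) x + Set.indicator A (fun _ => β) x)^2 ∂ν)
      = α^2 * (ν s).toReal + β^2 * (ν A).toReal := by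
  have hpt : ∀ x, (Set.indicator s (fun _ => α) x + Set.indicator A (fun _ => β) x)^2
      = Set.indicator s (fun _ => α^2) x + Set.indicator A (fun _ => β^2) x := by
    intro x
    by_cases hxs : x ∈ s
    · have hxA : x ∉ A := Set.disjoint_left.mp hdisj hxs
      simp [Set.indicator_of_mem hxs, Set.indicator_of_notMem hxA]
    · by_cases hxA : x ∈ A
      · simp [Set.indicator_of_mem hxA, Set.indicator_of_notMem hxs]
      · simp [Set.indicator_of_notMem hxA, Set.indicator_of_notMem hxs]
  simp_rw [hpt]
  rw [integral_add ((integrable_const _).indicator hs) ((integrable_const _).indicator hA),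
    integral_indicator_const _ hs, integral_indicator_const _ hA, smul_eq_mul, smul_eq_mul]
  rw [measureReal_def, measureReal_def]
  ring

lemma form_indicator_lower {μ : ℝ} (hμ : 0 ≤ μ) {s A : Set ℝ} (hs : MeasurableSet s)
    (hA : MeasurableSet A) (hdisj : Disjoint s A) {α β d e : ℝ}
    (hα : 0 ≤ α) (hβ : 0 ≤ β) (hd : 0 ≤ d) (he : 0 ≤ e)
    (hks : ∀ x ∈ s, ∀ y ∈ s, d ≤ Real.exp (-μ * |x - y|))
    (hkm : ∀ x ∈ s, ∀ y ∈ A, e ≤ Real.exp (-μ * |x - y|)) :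
    (d * α * (ν s).toReal + e * β * (ν A).toReal) * (α * (ν s).toReal)
      + e * α * (ν s).toReal * (β * (ν A).toReal)
      ≤ expKernelForm ν μ
        (fun x => Set.indicator s (fun _ => α) x + Set.indicator A (fun _ => β) x) := by
  set f := fun x => Set.indicator s (fun _ => α) x + Set.indicator A (fun _ => β) x with hfdef
  have hfmeas : Measurable f :=
    (measurable_const.indicator hs).add (measurable_const.indicator hA)
  have hf0 : ∀ x, 0 ≤ f x := fun x =>
    add_nonneg (Set.indicator_nonneg (fun _ _ => hα) x) (Set.indicator_nonneg (fun _ _ => hβ) x)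
  have hfle : ∀ x, f x ≤ α + β := by
    intro x
    by_cases hxs : x ∈ s
    · have hxA : x ∉ A := Set.disjoint_left.mp hdisj hxs
      simp only [hfdef, Set.indicator_of_mem hxs, Set.indicator_of_notMem hxA, add_zero]
      linarith
    · by_cases hxA : x ∈ A
      · simp only [hfdef, Set.indicator_of_mem hxA, Set.indicator_of_notMem hxs, zero_add]
        linarith
      · simp only [hfdef, Set.indicator_of_notMem hxA, Set.indicator_of_notMem hxs, add_zero]
        linarith
  set F := fun x => ENNReal.ofReal (f x) with hFdef
  have hFs : ∀ x ∈ s, F x = ENNReal.ofReal α := by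
    intro x hxs
    have hxA : x ∉ A := Set.disjoint_left.mp hdisj hxs
    simp only [hFdef, hfdef, Set.indicator_of_mem hxs, Set.indicator_of_notMem hxA, add_zero]
  have hFA : ∀ x ∈ A, F x = ENNReal.ofReal β := by
    intro x hxA
    have hxs : x ∉ s := Set.disjoint_right.mp hdisj hxA
    simp only [hFdef, hfdef, Set.indicator_of_mem hxA, Set.indicator_of_notMem hxs, zero_add]
  have hL1 : ∫⁻ x, F x ∂ν ≠ ∞ := by
    refine ne_top_of_le_ne_top ?_ (lintegral_mono fun x => ENNReal.ofReal_le_ofReal (hfle x))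
    rw [lintegral_const]
    exact ENNReal.mul_ne_top ENNReal.ofReal_ne_top (measure_ne_top ν _)
  set s' := ν s with hs'def
  set a' := ν A with ha'def
  set α' := ENNReal.ofReal α with hα'def
  set β' := ENNReal.ofReal β with hβ'def
  set d' := ENNReal.ofReal d with hd'def
  set e' := ENNReal.ofReal e with he'def
  -- inner integral lower bounds
  have hinner_s : ∀ x ∈ s, d' * α' * s' + e' * β' * a' ≤ ∫⁻ y, kE μ x y * F y ∂ν := by
    intro x hxs
    have hsplit : (∫⁻ y in s ∪ A, kE μ x y * F y ∂ν)
        = (∫⁻ y in s, kE μ x y * F y ∂ν) + ∫⁻ y in A, kE μ x y * F y ∂ν :=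
      lintegral_union hA hdisj
    have h1 : d' * α' * s' ≤ ∫⁻ y in s, kE μ x y * F y ∂ν := by
      calc d' * α' * s' = ∫⁻ _ in s, d' * α' ∂ν := (setLIntegral_const s _).symm
        _ ≤ ∫⁻ y in s, kE μ x y * F y ∂ν := by
          apply setLIntegral_mono' hs
          intro y hy
          rw [hFs y hy]
          exact mul_le_mul' (ENNReal.ofReal_le_ofReal (hks x hxs y hy)) le_rfl
    have h2 : e' * β' * a' ≤ ∫⁻ y in A, kE μ x y * F y ∂ν := by
      calc e' * β' * a' = ∫⁻ _ in A, e' * β' ∂ν := (setLIntegral_const A _).symm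
        _ ≤ ∫⁻ y in A, kE μ x y * F y ∂ν := by
          apply setLIntegral_mono' hA
          intro y hy
          rw [hFA y hy]
          exact mul_le_mul' (ENNReal.ofReal_le_ofReal (hkm x hxs y hy)) le_rfl
    calc d' * α' * s' + e' * β' * a' ≤ _ + _ := add_le_add h1 h2
      _ = ∫⁻ y in s ∪ A, kE μ x y * F y ∂ν := hsplit.symm
      _ ≤ ∫⁻ y, kE μ x y * F y ∂ν := setLIntegral_le_lintegral _ _
  have hinner_A : ∀ x ∈ A, e' * α' * s' ≤ ∫⁻ y, kE μ x y * F y ∂ν := by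
    intro x hxA
    calc e' * α' * s' = ∫⁻ _ in s, e' * α' ∂ν := (setLIntegral_const s _).symm
      _ ≤ ∫⁻ y in s, kE μ x y * F y ∂ν := by
        apply setLIntegral_mono' hs
        intro y hy
        rw [hFs y hy]
        refine mul_le_mul' (ENNReal.ofReal_le_ofReal ?_) le_rfl
        have := hkm y hy x hxA
        rwa [abs_sub_comm y x] at this
      _ ≤ ∫⁻ y, kE μ x y * F y ∂ν := setLIntegral_le_lintegral _ _
  -- outer lower bound
  have houter : (d' * α' * s' + e' * β' * a') * (α' * s') + (e' * α' * s') * (β' * a')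
      ≤ lB ν (kE μ) F := by
    have hsplit : (∫⁻ x in s ∪ A, (∫⁻ y, kE μ x y * F y ∂ν) * F x ∂ν)
        = (∫⁻ x in s, (∫⁻ y, kE μ x y * F y ∂ν) * F x ∂ν)
          + ∫⁻ x in A, (∫⁻ y, kE μ x y * F y ∂ν) * F x ∂ν :=
      lintegral_union hA hdisj
    have h1 : (d' * α' * s' + e' * β' * a') * α' * s'
        ≤ ∫⁻ x in s, (∫⁻ y, kE μ x y * F y ∂ν) * F x ∂ν := by
      calc (d' * α' * s' + e' * β' * a') * α' * s'
          = ∫⁻ _ in s, (d' * α' * s' + e' * β' * a') * α' ∂ν := (setLIntegral_const s _).symm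
        _ ≤ _ := by
          apply setLIntegral_mono' hs
          intro x hx
          rw [hFs x hx]
          exact mul_le_mul' (hinner_s x hx) le_rfl
    have h2 : (e' * α' * s') * β' * a'
        ≤ ∫⁻ x in A, (∫⁻ y, kE μ x y * F y ∂ν) * F x ∂ν := by
      calc (e' * α' * s') * β' * a'
          = ∫⁻ _ in A, (e' * α' * s') * β' ∂ν := (setLIntegral_const A _).symm
        _ ≤ _ := by
          apply setLIntegral_mono' hA
          intro x hx
          rw [hFA x hx]
          exact mul_le_mul' (hinner_A x hx) le_rfl
    calc (d' * α' * s' + e' * β' * a') * (α' * s') + (e' * α' * s') * (β' * a')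
        = (d' * α' * s' + e' * β' * a') * α' * s' + (e' * α' * s') * β' * a' := by ring
      _ ≤ _ + _ := add_le_add h1 h2
      _ = ∫⁻ x in s ∪ A, (∫⁻ y, kE μ x y * F y ∂ν) * F x ∂ν := hsplit.symm
      _ ≤ lB ν (kE μ) F := setLIntegral_le_lintegral _ _
  -- convert to real
  have hsr : ENNReal.ofReal ((ν s).toReal) = s' := ENNReal.ofReal_toReal (measure_ne_top ν s)
  have har : ENNReal.ofReal ((ν A).toReal) = a' := ENNReal.ofReal_toReal (measure_ne_top ν A)
  have hofReal : ENNReal.ofReal ((d * α * (ν s).toReal + e * β * (ν A).toReal)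
        * (α * (ν s).toReal) + e * α * (ν s).toReal * (β * (ν A).toReal))
      = (d' * α' * s' + e' * β' * a') * (α' * s') + (e' * α' * s') * (β' * a') := by
    rw [ENNReal.ofReal_add (by positivity) (by positivity)]
    congr 1
    · rw [ENNReal.ofReal_mul (by positivity), ENNReal.ofReal_add (by positivity) (by positivity),
        ENNReal.ofReal_mul (by positivity), ENNReal.ofReal_mul (by positivity),
        ENNReal.ofReal_mul (by positivity), ENNReal.ofReal_mul (by positivity),
        ENNReal.ofReal_mul hα, hsr, har]
    · rw [ENNReal.ofReal_mul (by positivity), ENNReal.ofReal_mul (by positivity),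
        ENNReal.ofReal_mul (by positivity), ENNReal.ofReal_mul hβ, hsr, har]
  rw [form_eq hμ hfmeas hf0 hL1]
  calc (d * α * (ν s).toReal + e * β * (ν A).toReal) * (α * (ν s).toReal)
        + e * α * (ν s).toReal * (β * (ν A).toReal)
      = (ENNReal.ofReal ((d * α * (ν s).toReal + e * β * (ν A).toReal)
          * (α * (ν s).toReal) + e * α * (ν s).toReal * (β * (ν A).toReal))).toReal := by
        rw [ENNReal.toReal_ofReal (by positivity)]
    _ ≤ (lB ν (kE μ) F).toReal := by
        apply ENNReal.toReal_mono (lB_ne_top hμ hL1)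
        rw [hofReal]
        exact houter

lemma exists_mem_pos (hν : ν ≠ 0) {μ : ℝ} (hμ : 0 ≤ μ) :
    ∃ r ∈ { r : ℝ | ∃ f : ℝ → ℝ, MemLp f 2 ν ∧ (∫ x, (f x) ^ 2 ∂ν) = 1 ∧
      r = expKernelForm ν μ f }, 0 < r := by
  have huniv : ν Set.univ ≠ 0 := fun h => hν (Measure.measure_univ_eq_zero.mp h)
  have hcover : (Set.univ : Set ℝ) = ⋃ n : ℕ, Metric.closedBall (0:ℝ) n := by
    ext x
    simp only [Set.mem_univ, true_iff, Set.mem_iUnion, Metric.mem_closedBall]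
    obtain ⟨n, hn⟩ := exists_nat_ge (dist x 0)
    exact ⟨n, hn⟩
  obtain ⟨n, hn⟩ : ∃ n : ℕ, ν (Metric.closedBall (0:ℝ) n) ≠ 0 := by
    by_contra hc
    push_neg at hc
    apply huniv
    rw [hcover]
    exact measure_iUnion_null fun n => hc n
  set s := Metric.closedBall (0:ℝ) n with hsdef
  set m := (ν s).toReal with hmdef
  have hm : 0 < m := ENNReal.toReal_pos hn (measure_ne_top ν s)
  set α := 1 / Real.sqrt m with hαdef
  have hα : 0 < α := by positivity
  have hαsq : α^2 * m = 1 := by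
    rw [hαdef, one_div, ← Real.sqrt_inv, Real.sq_sqrt (by positivity)]
    field_simp
  set f := fun x => Set.indicator s (fun _ => α) x + Set.indicator (∅ : Set ℝ) (fun _ => (0:ℝ)) x
    with hfdef
  have hdisj : Disjoint s (∅ : Set ℝ) := Set.disjoint_empty s
  have hmem : MemLp f 2 ν :=
    indicator_pair_memLp measurableSet_closedBall MeasurableSet.empty hdisj hα.le le_rfl
  have hint : (∫ x, (f x)^2 ∂ν) = 1 := by
    rw [hfdef, indicator_pair_sq_integral measurableSet_closedBall MeasurableSet.empty hdisj]
    simp [← hsdef, ← hmdef, hαsq]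
  refine ⟨expKernelForm ν μ f, ⟨f, hmem, hint, rfl⟩, ?_⟩
  have hks : ∀ x ∈ s, ∀ y ∈ s, Real.exp (-μ * (2*n)) ≤ Real.exp (-μ * |x - y|) := by
    intro x hx y hy
    apply Real.exp_le_exp.mpr
    rw [hsdef, Metric.mem_closedBall, Real.dist_eq, sub_zero] at hx hy
    have habs : |x - y| ≤ 2 * n := by
      have := abs_sub_abs_le_abs_sub x y
      have h2 := abs_sub (x) (y)
      calc |x - y| ≤ |x| + |y| := abs_sub x y
        _ ≤ 2 * n := by linarith
    nlinarith
  have hlow := form_indicator_lower (ν := ν) hμ measurableSet_closedBall MeasurableSet.empty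
    hdisj hα.le le_rfl (Real.exp_nonneg (-μ * (2*n))) (Real.exp_nonneg (-μ * (2*n))) hks
    (fun x _ y hy => absurd hy (Set.notMem_empty y))
  rw [← hfdef] at hlow
  have hval : (0:ℝ) < (Real.exp (-μ * (2*n)) * α * m + Real.exp (-μ * (2*n)) * 0 * (ν (∅:Set ℝ)).toReal)
      * (α * m) + Real.exp (-μ * (2*n)) * α * m * (0 * (ν (∅:Set ℝ)).toReal) := by
    simp only [measure_empty, ENNReal.toReal_zero, mul_zero, zero_mul, add_zero]
    have := Real.exp_pos (-μ * (2*n))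
    positivity
  calc (0:ℝ) < _ := hval
    _ ≤ expKernelForm ν μ f := by
      rw [← hmdef] at hlow
      exact hlow


end

end ExpKernelAux

set_option maxHeartbeats 4000000 in
open ExpKernelAux ENNReal NNReal in
/-- **Strict monotonicity of the largest eigenvalue of `T_μ`**: if the finite
nonnegative Borel measure `ν ≠ 0` is not concentrated at a single point, then the
largest eigenvalue of the integral operator `T_μ` on `L²(ℝ, ν)` with kernel
`e^{-μ|x-y|}` is strictly decreasing in `μ ≥ 0`. -/
theorem expKernelTop_strict_anti
    (ν : Measure ℝ) [IsFiniteMeasure ν] (hν : ν ≠ 0)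
    (hpt : ¬ ∃ x₀ : ℝ, ν ({x₀}ᶜ) = 0)
    (μ₁ μ₂ : ℝ) (hμ₂ : 0 ≤ μ₂) (hμ : μ₂ < μ₁) :
    expKernelTop ν μ₁ < expKernelTop ν μ₂ := by
  classical
  have hμ₁ : 0 ≤ μ₁ := hμ₂.trans hμ.le
  have hμ₁pos : 0 < μ₁ := lt_of_le_of_lt hμ₂ hμ
  set T : ℝ → Set ℝ := fun μ => { r : ℝ | ∃ f : ℝ → ℝ, MemLp f 2 ν ∧
    (∫ x, (f x) ^ 2 ∂ν) = 1 ∧ r = expKernelForm ν μ f } with hTdef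
  have hTop : ∀ μ : ℝ, expKernelTop ν μ = sSup (T μ) := fun μ => rfl
  have hbdd : ∀ μ : ℝ, 0 ≤ μ → BddAbove (T μ) := fun μ h => bddAbove_topSet μ h
  obtain ⟨r₀, hr₀mem, hr₀pos⟩ := exists_mem_pos (ν := ν) hν hμ₁
  have hne₁ : (T μ₁).Nonempty := ⟨r₀, hr₀mem⟩
  have h12 : expKernelTop ν μ₁ ≤ expKernelTop ν μ₂ := by
    rw [hTop, hTop]
    apply csSup_le hne₁
    rintro r ⟨f, hf, h2, rfl⟩
    obtain ⟨g, hgm, hg0, hg2, hgint, hgL1, hgle⟩ := goodify hf h2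
    calc expKernelForm ν μ₁ f ≤ expKernelForm ν μ₁ g := hgle μ₁ hμ₁
      _ ≤ expKernelForm ν μ₂ g := form_mono_mu hμ₂ hμ.le hgm hg0 hgL1
      _ ≤ sSup (T μ₂) := le_csSup (hbdd μ₂ hμ₂) ⟨g, hg2, hgint, rfl⟩
  by_contra hcon
  push_neg at hcon
  have heq : expKernelTop ν μ₁ = expKernelTop ν μ₂ := le_antisymm h12 hcon
  set t := expKernelTop ν μ₁ with htdef
  have ht_pos : 0 < t := lt_of_lt_of_le hr₀pos (by rw [htdef, hTop]; exact le_csSup (hbdd μ₁ hμ₁) hr₀mem)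
  set Mtot : ℝ≥0∞ := 1 + ν Set.univ with hMtot
  have hMtot_ne : Mtot ≠ ∞ := ENNReal.add_ne_top.mpr ⟨ENNReal.one_ne_top, measure_ne_top ν _⟩
  set C₀ : ℝ := (Mtot * Mtot).toReal with hC₀
  have hC₀eq : C₀ = Mtot.toReal * Mtot.toReal := ENNReal.toReal_mul
  have hC₀pos : (1:ℝ) ≤ C₀ := by
    rw [hC₀]
    have h1 : (1:ℝ≥0∞) ≤ Mtot * Mtot := by
      calc (1:ℝ≥0∞) = 1 * 1 := (one_mul 1).symm
        _ ≤ Mtot * Mtot := mul_le_mul' le_self_add le_self_add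
    calc (1:ℝ) = (1:ℝ≥0∞).toReal := ENNReal.toReal_one.symm
      _ ≤ (Mtot * Mtot).toReal := ENNReal.toReal_mono (ENNReal.mul_ne_top hMtot_ne hMtot_ne) h1
  -- Step D : key estimate
  have key : ∀ δ : ℝ, 0 < δ → ENNReal.ofReal t ≤ ⨆ x : ℝ, ν (Metric.ball x δ) := by
    intro δ hδ
    set Sδ := ⨆ x : ℝ, ν (Metric.ball x δ) with hSδ
    have hSfin : Sδ ≠ ∞ := ne_top_of_le_ne_top (measure_ne_top ν _)
      (iSup_le fun x => measure_mono (Set.subset_univ _))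
    set St := Sδ.toReal with hSt
    have claim1 : ∀ R : ℝ, δ ≤ R → t ≤ St + Real.exp (-μ₁ * R) * C₀ := by
      intro R hδR
      apply _root_.le_of_forall_pos_le_add
      intro ε hε
      set c := Real.exp (-μ₂ * R) * (1 - Real.exp (-(μ₁ - μ₂) * δ)) with hc
      have hcpos : 0 < c := by
        apply mul_pos (Real.exp_pos _)
        have hlt : Real.exp (-(μ₁ - μ₂) * δ) < 1 := by
          rw [show (1:ℝ) = Real.exp 0 from Real.exp_zero.symm]
          apply Real.exp_lt_exp.mpr
          nlinarith
        linarith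
      set ε' := ε / (1 + 1/c) with hε'
      have hdenpos : (0:ℝ) < 1 + 1/c := by positivity
      have hε'pos : 0 < ε' := by positivity
      obtain ⟨r, hrmem, hrgt⟩ := exists_lt_of_lt_csSup hne₁
        (show t - ε' < sSup (T μ₁) by rw [← hTop, ← htdef]; linarith)
      obtain ⟨f, hf, h2, rfl⟩ := hrmem
      obtain ⟨g, hgm, hg0, hg2, hgint, hgL1, hgle⟩ := goodify hf h2
      have hQ1 : t - ε' < expKernelForm ν μ₁ g := lt_of_lt_of_le hrgt (hgle μ₁ hμ₁)
      have hQ2 : expKernelForm ν μ₂ g ≤ t := by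
        calc expKernelForm ν μ₂ g ≤ sSup (T μ₂) := le_csSup (hbdd μ₂ hμ₂) ⟨g, hg2, hgint, rfl⟩
          _ = t := by rw [← hTop, ← heq]
      set G := fun x => ENNReal.ofReal (g x) with hGdef
      have hGmeas : Measurable G := measurable_ofReal.comp hgm
      have hGfin : ∀ x, G x ≠ ∞ := fun x => ENNReal.ofReal_ne_top
      have hG2 : ∫⁻ x, (G x)^2 ∂ν = 1 := lint_sq hgm hg0 hg2 hgint
      have hL1le : ∫⁻ x, G x ∂ν ≤ Mtot := lint_le_add_one hGmeas hG2
      have hB1 := form_eq (ν := ν) hμ₁ hgm hg0 hgL1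
      have hB2 := form_eq (ν := ν) hμ₂ hgm hg0 hgL1
      have hfin1 : lB ν (kE μ₁) G ≠ ∞ := lB_ne_top hμ₁ hgL1
      have hfin2 : lB ν (kE μ₂) G ≠ ∞ := lB_ne_top hμ₂ hgL1
      have hfinMid : lB ν (kMid δ R) G ≠ ∞ := by
        refine ne_top_of_le_ne_top ?_ (lB_le one_ne_top (kMid_le_one δ R) hgL1)
        rw [one_mul]
        exact ENNReal.mul_ne_top hgL1 hgL1
      set D := (lB ν (kMid δ R) G).toReal with hD
      have hDnn : 0 ≤ D := ENNReal.toReal_nonneg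
      have hgain : lB ν (kE μ₁) G + ENNReal.ofReal c * lB ν (kMid δ R) G
          ≤ lB ν (kE μ₂) G := by
        calc lB ν (kE μ₁) G + ENNReal.ofReal c * lB ν (kMid δ R) G
            = lB ν (fun x y => kE μ₁ x y + ENNReal.ofReal c * kMid δ R x y) G := by
              rw [lB_add (measurable_kE μ₁) ((measurable_kMid δ R).const_mul _) hGmeas,
                lB_smul ENNReal.ofReal_ne_top G]
          _ ≤ lB ν (kE μ₂) G := lB_mono_K (fun x y => kernel_gain hδ.le hμ₂ hμ x y) G
      have hcD : c * D < ε' := by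
        have h := ENNReal.toReal_mono hfin2 hgain
        rw [ENNReal.toReal_add hfin1 (ENNReal.mul_ne_top ENNReal.ofReal_ne_top hfinMid),
          ENNReal.toReal_mul, ENNReal.toReal_ofReal hcpos.le, ← hD] at h
        rw [← hB1, ← hB2] at h
        linarith
      have hdecomp : lB ν (kE μ₁) G ≤ Sδ + lB ν (kMid δ R) G
          + ENNReal.ofReal (Real.exp (-μ₁*R)) * Mtot * Mtot := by
        calc lB ν (kE μ₁) G
            ≤ lB ν (fun x y => kNear δ x y + kMid δ R x y
                + ENNReal.ofReal (Real.exp (-μ₁*R))) G :=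
              lB_mono_K (fun x y => kernel_decomp hμ₁ x y) G
          _ = lB ν (fun x y => kNear δ x y + kMid δ R x y) G
              + lB ν (fun _ _ => ENNReal.ofReal (Real.exp (-μ₁*R))) G := by
              rw [lB_add (K := fun x y => kNear δ x y + kMid δ R x y)
                (show Measurable (Function.uncurry fun x y => kNear δ x y + kMid δ R x y) from
                  (measurable_kNear δ).add (measurable_kMid δ R))
                measurable_const hGmeas]
          _ = lB ν (kNear δ) G + lB ν (kMid δ R) G
              + lB ν (fun _ _ => ENNReal.ofReal (Real.exp (-μ₁*R))) G := by
              rw [lB_add (measurable_kNear δ) (measurable_kMid δ R) hGmeas]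
          _ ≤ Sδ + lB ν (kMid δ R) G
              + ENNReal.ofReal (Real.exp (-μ₁*R)) * Mtot * Mtot := by
              apply add_le_add (add_le_add (schur hGmeas hGfin hG2) le_rfl)
              rw [lB_const ENNReal.ofReal_ne_top hgL1]
              exact mul_le_mul' (mul_le_mul' le_rfl hL1le) hL1le
      have hQ1le : expKernelForm ν μ₁ g ≤ St + D + Real.exp (-μ₁*R) * C₀ := by
        have hrhs_ne : Sδ + lB ν (kMid δ R) G
            + ENNReal.ofReal (Real.exp (-μ₁*R)) * Mtot * Mtot ≠ ∞ := by
          apply ENNReal.add_ne_top.mpr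
          constructor
          · exact ENNReal.add_ne_top.mpr ⟨hSfin, hfinMid⟩
          · exact ENNReal.mul_ne_top (ENNReal.mul_ne_top ENNReal.ofReal_ne_top hMtot_ne) hMtot_ne
        have h := ENNReal.toReal_mono hrhs_ne hdecomp
        rw [ENNReal.toReal_add (ENNReal.add_ne_top.mpr ⟨hSfin, hfinMid⟩)
            (ENNReal.mul_ne_top (ENNReal.mul_ne_top ENNReal.ofReal_ne_top hMtot_ne) hMtot_ne),
          ENNReal.toReal_add hSfin hfinMid, ENNReal.toReal_mul, ENNReal.toReal_mul,
          ENNReal.toReal_ofReal (Real.exp_nonneg _), ← hD, ← hSt, ← hB1] at h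
        rw [hC₀eq]
        linarith
      have hDle : D ≤ ε'/c := by
        rw [le_div_iff₀ hcpos]
        nlinarith
      have hεeq : ε' + ε'/c = ε := by
        rw [hε']
        field_simp
      have hQmid := hQ1le
      linarith [hQ1, hQ1le, hDle]
    have claim2 : t ≤ St := by
      apply _root_.le_of_forall_pos_le_add
      intro ε hε
      set R := max δ ((Real.log (C₀ / ε)) / μ₁ + 1) with hR
      have hδR : δ ≤ R := le_max_left _ _
      have hexp : Real.exp (-μ₁ * R) * C₀ ≤ ε := by
        have hRge : (Real.log (C₀/ε)) / μ₁ + 1 ≤ R := le_max_right _ _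
        have h1 : Real.log (C₀/ε) < μ₁ * R := by
          have h0 : Real.log (C₀/ε) / μ₁ < R := by linarith
          calc Real.log (C₀/ε) = μ₁ * (Real.log (C₀/ε) / μ₁) := by field_simp
            _ < μ₁ * R := by exact mul_lt_mul_of_pos_left h0 hμ₁pos
        have h2 : Real.exp (-μ₁ * R) < Real.exp (-(Real.log (C₀/ε))) := by
          apply Real.exp_lt_exp.mpr
          linarith
        have h3 : Real.exp (-(Real.log (C₀/ε))) = ε / C₀ := by
          rw [Real.exp_neg, Real.exp_log (by positivity), inv_div]
        have h4 : Real.exp (-μ₁ * R) ≤ ε / C₀ := by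
          rw [← h3]
          exact h2.le
        calc Real.exp (-μ₁ * R) * C₀ ≤ (ε / C₀) * C₀ := by nlinarith
          _ = ε := by field_simp
      calc t ≤ St + Real.exp (-μ₁*R) * C₀ := claim1 R hδR
        _ ≤ St + ε := by linarith
    calc ENNReal.ofReal t ≤ ENNReal.ofReal St := ENNReal.ofReal_le_ofReal claim2
      _ = Sδ := ENNReal.ofReal_toReal hSfin
  -- Step E : existence of a big atom
  obtain ⟨x₀, hx₀⟩ : ∃ x₀ : ℝ, ENNReal.ofReal t ≤ ν {x₀} := by
    have hchoice : ∀ n : ℕ, ∃ z : ℝ,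
        ENNReal.ofReal t - ((n:ℝ≥0∞)+1)⁻¹ < ν (Metric.ball z (1/((n:ℝ)+1))) := by
      intro n
      have hk := key (1/((n:ℝ)+1)) (by positivity)
      have hlt : ENNReal.ofReal t - ((n:ℝ≥0∞)+1)⁻¹
          < ⨆ z : ℝ, ν (Metric.ball z (1/((n:ℝ)+1))) := by
        refine lt_of_lt_of_le ?_ hk
        apply ENNReal.sub_lt_self ENNReal.ofReal_ne_top
          (ENNReal.ofReal_pos.mpr ht_pos).ne'
        exact ENNReal.inv_ne_zero.mpr (by finiteness)
      exact lt_iSup_iff.mp hlt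
    choose x hx using hchoice
    obtain ⟨m₀, hm₀⟩ : ∃ m₀ : ℕ, ν ((Metric.closedBall (0:ℝ) m₀)ᶜ) < ENNReal.ofReal (t/2) := by
      have hmono : Antitone fun m : ℕ => (Metric.closedBall (0:ℝ) m)ᶜ := by
        intro i j hij
        apply Set.compl_subset_compl.mpr
        exact Metric.closedBall_subset_closedBall (by exact_mod_cast hij)
      have hinter : ⋂ m : ℕ, (Metric.closedBall (0:ℝ) m)ᶜ = ∅ := by
        ext z
        simp only [Set.mem_iInter, Set.mem_compl_iff, Metric.mem_closedBall, not_le,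
          Set.mem_empty_iff_false, iff_false, not_forall, not_lt]
        obtain ⟨m, hm⟩ := exists_nat_ge (dist z 0)
        exact ⟨m, hm⟩
      have htend := tendsto_measure_iInter_atTop (μ := ν)
        (fun m => (measurableSet_closedBall.compl).nullMeasurableSet) hmono
        ⟨0, measure_ne_top ν _⟩
      rw [hinter, measure_empty] at htend
      have hpos2 : (0:ℝ≥0∞) < ENNReal.ofReal (t/2) := ENNReal.ofReal_pos.mpr (by linarith)
      obtain ⟨m₀, hm₀⟩ := (htend.eventually_lt_const hpos2).exists
      exact ⟨m₀, hm₀⟩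
    obtain ⟨n₁, hn₁⟩ := ENNReal.exists_inv_nat_lt
      (a := ENNReal.ofReal (t/2)) (ENNReal.ofReal_pos.mpr (by linarith)).ne'
    have hballbig : ∀ n : ℕ, n₁ ≤ n →
        ENNReal.ofReal (t/2) ≤ ν (Metric.ball (x n) (1/((n:ℝ)+1))) := by
      intro n hn
      have hsmall : ((n:ℝ≥0∞)+1)⁻¹ ≤ ENNReal.ofReal (t/2) := by
        refine le_trans ?_ hn₁.le
        apply ENNReal.inv_le_inv.mpr
        calc (n₁:ℝ≥0∞) ≤ (n:ℝ≥0∞) := by exact_mod_cast hn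
          _ ≤ (n:ℝ≥0∞)+1 := le_self_add
      have h3 : ENNReal.ofReal t - ENNReal.ofReal (t/2) = ENNReal.ofReal (t/2) := by
        rw [← ENNReal.ofReal_sub _ (by linarith)]
        congr 1
        ring
      have h2 : ENNReal.ofReal (t/2) ≤ ENNReal.ofReal t - ((n:ℝ≥0∞)+1)⁻¹ := by
        calc ENNReal.ofReal (t/2) = ENNReal.ofReal t - ENNReal.ofReal (t/2) := h3.symm
          _ ≤ ENNReal.ofReal t - ((n:ℝ≥0∞)+1)⁻¹ := tsub_le_tsub le_rfl hsmall
      exact h2.trans (hx n).le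
    have hxbound : ∀ n : ℕ, n₁ ≤ n → x n ∈ Metric.closedBall (0:ℝ) (m₀+1) := by
      intro n hn
      by_contra hc
      have hfar : Metric.ball (x n) (1/((n:ℝ)+1)) ⊆ (Metric.closedBall (0:ℝ) m₀)ᶜ := by
        intro z hz
        simp only [Metric.mem_ball] at hz
        simp only [Set.mem_compl_iff, Metric.mem_closedBall, not_le] at hc ⊢
        have hr : (1:ℝ)/((n:ℝ)+1) ≤ 1 := by
          rw [div_le_one (by positivity)]
          linarith [Nat.cast_nonneg (α := ℝ) n]
        have hd : dist z (x n) < 1 := lt_of_lt_of_le hz hr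
        have htri := dist_triangle (x n) z 0
        rw [dist_comm (x n) z] at htri
        linarith
      have hcontra : ENNReal.ofReal (t/2) ≤ ν ((Metric.closedBall (0:ℝ) m₀)ᶜ) :=
        le_trans (hballbig n hn) (measure_mono hfar)
      exact absurd (lt_of_le_of_lt hcontra hm₀) (lt_irrefl _)
    set y : ℕ → ℝ := fun k => x (k + n₁) with hydef
    have hy : ∀ k, y k ∈ Metric.closedBall (0:ℝ) (m₀+1) :=
      fun k => hxbound _ (Nat.le_add_left n₁ k)
    obtain ⟨x₀, hx₀mem, φ, hφmono, hφtend⟩ :=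
      (isCompact_closedBall (0:ℝ) (m₀+1)).tendsto_subseq hy
    refine ⟨x₀, ?_⟩
    have hball : ∀ ε : ℝ, 0 < ε → ENNReal.ofReal t ≤ ν (Metric.closedBall x₀ ε) := by
      intro ε hε
      apply ENNReal.le_of_forall_pos_le_add
      intro η hη _
      obtain ⟨n₂, hn₂⟩ := ENNReal.exists_inv_nat_lt (a := (η:ℝ≥0∞))
        (by exact_mod_cast hη.ne')
      obtain ⟨K₁, hK₁⟩ := Metric.tendsto_atTop.mp hφtend (ε/2) (by positivity)
      obtain ⟨K₃, hK₃⟩ := exists_nat_gt (2/ε)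
      set k := max K₁ (max n₂ K₃) with hkdef
      set m := φ k + n₁ with hmdef
      have hφk : k ≤ φ k := hφmono.le_apply
      have hc1 : dist (x m) x₀ < ε/2 := by
        have h := hK₁ k (le_max_left _ _)
        simpa [hydef, hmdef] using h
      have hkm : k ≤ m := le_trans hφk (Nat.le_add_right _ _)
      have hn₂k : n₂ ≤ k := le_trans (le_max_left _ _) (le_max_right _ _)
      have hK₃k : K₃ ≤ k := le_trans (le_max_right _ _) (le_max_right _ _)
      have hmK₃ : (K₃:ℝ) ≤ (m:ℝ)+1 := by
        have h1 : K₃ ≤ m := le_trans hK₃k hkm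
        have : (K₃:ℝ) ≤ (m:ℝ) := by exact_mod_cast h1
        linarith
      clear_value k m
      have hc2 : 1/((m:ℝ)+1) < ε/2 := by
        have h2 : 2/ε < (m:ℝ)+1 := lt_of_lt_of_le hK₃ hmK₃
        have h4 := one_div_lt_one_div_of_lt (by positivity) h2
        rwa [one_div_div] at h4
      have hc3 : ((m:ℝ≥0∞)+1)⁻¹ ≤ (η:ℝ≥0∞) := by
        refine le_trans ?_ hn₂.le
        apply ENNReal.inv_le_inv.mpr
        have h1 : n₂ ≤ m := le_trans hn₂k hkm
        calc (n₂:ℝ≥0∞) ≤ (m:ℝ≥0∞) := by exact_mod_cast h1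
          _ ≤ (m:ℝ≥0∞)+1 := le_self_add
      have hsub : Metric.ball (x m) (1/((m:ℝ)+1)) ⊆ Metric.closedBall x₀ ε := by
        intro z hz
        simp only [Metric.mem_ball] at hz
        simp only [Metric.mem_closedBall]
        have htri := dist_triangle z (x m) x₀
        linarith
      calc ENNReal.ofReal t
          ≤ ν (Metric.ball (x m) (1/((m:ℝ)+1))) + ((m:ℝ≥0∞)+1)⁻¹ :=
            tsub_le_iff_right.mp (hx m).le
        _ ≤ ν (Metric.closedBall x₀ ε) + (η:ℝ≥0∞) := add_le_add (measure_mono hsub) hc3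
    have hmono2 : Antitone fun m : ℕ => Metric.closedBall x₀ (1/((m:ℝ)+1)) := by
      intro i j hij
      apply Metric.closedBall_subset_closedBall
      apply one_div_le_one_div_of_le (by positivity)
      have : (i:ℝ) ≤ (j:ℝ) := by exact_mod_cast hij
      linarith
    have hinter2 : ⋂ m : ℕ, Metric.closedBall x₀ (1/((m:ℝ)+1)) = {x₀} := by
      ext z
      simp only [Set.mem_iInter, Metric.mem_closedBall, Set.mem_singleton_iff]
      constructor
      · intro h
        by_contra hne
        have hdz : 0 < dist z x₀ := dist_pos.mpr hne
        obtain ⟨m, hm⟩ := exists_nat_one_div_lt hdz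
        exact absurd (h m) (not_le.mpr hm)
      · intro h
        subst h
        intro m
        rw [dist_self]
        positivity
    have htend2 := tendsto_measure_iInter_atTop (μ := ν)
      (fun m => measurableSet_closedBall.nullMeasurableSet) hmono2 ⟨0, measure_ne_top ν _⟩
    rw [hinter2] at htend2
    exact ge_of_tendsto htend2 (Filter.Eventually.of_forall fun m => hball _ (by positivity))
  -- Step F : competitor beats the atom
  set a := (ν {x₀}).toReal with hadef
  have ha_t : t ≤ a := by
    have h := ENNReal.toReal_mono (measure_ne_top ν {x₀}) hx₀
    rwa [ENNReal.toReal_ofReal ht_pos.le] at h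
  have ha : 0 < a := lt_of_lt_of_le ht_pos ha_t
  have hptx : ν ({x₀}ᶜ) ≠ 0 := fun h => hpt ⟨x₀, h⟩
  obtain ⟨n, hb0⟩ : ∃ n : ℕ, ν (Metric.closedBall x₀ ((n:ℝ)+1) \ {x₀}) ≠ 0 := by
    by_contra hc
    push_neg at hc
    apply hptx
    have hcover : ({x₀}ᶜ : Set ℝ) = ⋃ n : ℕ, (Metric.closedBall x₀ ((n:ℝ)+1) \ {x₀}) := by
      ext z
      simp only [Set.mem_compl_iff, Set.mem_singleton_iff, Set.mem_iUnion, Set.mem_diff,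
        Metric.mem_closedBall]
      constructor
      · intro hz
        obtain ⟨n, hn⟩ := exists_nat_ge (dist z x₀)
        exact ⟨n, ⟨by linarith, hz⟩⟩
      · rintro ⟨n, hn⟩
        exact hn.2
    rw [hcover]
    exact measure_iUnion_null fun n => hc n
  set R : ℝ := (n:ℝ) + 1 with hRdef
  set A := Metric.closedBall x₀ R \ {x₀} with hAdef
  have hAmeas : MeasurableSet A := measurableSet_closedBall.diff (measurableSet_singleton x₀)
  set b := (ν A).toReal with hbdef
  have hb : 0 < b := ENNReal.toReal_pos hb0 (measure_ne_top ν _)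
  set e := Real.exp (-μ₁ * R) with hedef
  have he : 0 < e := Real.exp_pos _
  set β := min (1 / Real.sqrt (2*b)) (e / Real.sqrt (2*a)) with hβdef
  have hβ : 0 < β := lt_min (by positivity) (by positivity)
  have hβb : β^2 * b ≤ 1/2 := by
    have h1 : β ≤ 1/Real.sqrt (2*b) := min_le_left _ _
    have h2 : β^2 ≤ (1/Real.sqrt (2*b))^2 := by
      apply pow_le_pow_left₀ hβ.le h1
    have h3 : (1/Real.sqrt (2*b))^2 = 1/(2*b) := by
      rw [div_pow, one_pow, Real.sq_sqrt (by positivity)]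
    calc β^2 * b ≤ (1/(2*b)) * b := by
          rw [← h3]
          exact mul_le_mul_of_nonneg_right h2 hb.le
      _ = 1/2 := by
          field_simp
  have hhalf : (1:ℝ)/2 ≤ 1 - β^2*b := by linarith
  set α := Real.sqrt ((1 - β^2*b)/a) with hαdef
  have hα : 0 < α := Real.sqrt_pos.mpr (by positivity)
  have hα2 : α^2 * a = 1 - β^2*b := by
    rw [hαdef, Real.sq_sqrt (by positivity), div_mul_cancel₀ _ ha.ne']
  have hαge : 1/Real.sqrt (2*a) ≤ α := by
    have h1 : (1:ℝ)/Real.sqrt (2*a) = Real.sqrt (1/(2*a)) := by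
      rw [one_div, one_div, Real.sqrt_inv]
    rw [h1, hαdef]
    apply Real.sqrt_le_sqrt
    rw [div_le_div_iff₀ (by positivity) ha]
    nlinarith
  set f := fun x => Set.indicator {x₀} (fun _ => α) x + Set.indicator A (fun _ => β) x
    with hfdef
  have hdisj : Disjoint ({x₀} : Set ℝ) A := by
    apply Set.disjoint_left.mpr
    intro z hz
    rw [Set.mem_singleton_iff] at hz
    subst hz
    rw [hAdef]
    intro hzA
    exact hzA.2 rfl
  have hmem : MemLp f 2 ν :=
    indicator_pair_memLp (measurableSet_singleton x₀) hAmeas hdisj hα.le hβ.le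
  have hint : (∫ x, (f x)^2 ∂ν) = 1 := by
    rw [hfdef, indicator_pair_sq_integral (measurableSet_singleton x₀) hAmeas hdisj]
    rw [← hadef, ← hbdef]
    nlinarith [hα2]
  have hrle : expKernelForm ν μ₁ f ≤ t := by
    rw [htdef, hTop]
    exact le_csSup (hbdd μ₁ hμ₁) ⟨f, hmem, hint, rfl⟩
  have hks : ∀ x ∈ ({x₀} : Set ℝ), ∀ y ∈ ({x₀} : Set ℝ), (1:ℝ) ≤ Real.exp (-μ₁*|x-y|) := by
    intro u hu v hv
    rw [Set.mem_singleton_iff] at hu hv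
    subst hu
    subst hv
    simp
  have hkm' : ∀ x ∈ ({x₀} : Set ℝ), ∀ y ∈ A, e ≤ Real.exp (-μ₁*|x-y|) := by
    intro u hu v hv
    rw [Set.mem_singleton_iff] at hu
    subst hu
    have hvd : dist v u ≤ R := hv.1
    rw [Real.dist_eq] at hvd
    rw [hedef]
    apply Real.exp_le_exp.mpr
    rw [abs_sub_comm u v]
    nlinarith [abs_nonneg (v - u)]
  have hlow := form_indicator_lower (ν := ν) hμ₁ (measurableSet_singleton x₀) hAmeas hdisj
    hα.le hβ.le zero_le_one he.le hks hkm'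
  rw [← hfdef, ← hadef, ← hbdef] at hlow
  have h2eα : β < 2*e*α := by
    have hβle : β ≤ e/Real.sqrt (2*a) := min_le_right _ _
    have hstep : e/Real.sqrt (2*a) < 2*e*α := by
      calc e/Real.sqrt (2*a) = e * (1/Real.sqrt (2*a)) := by ring
        _ ≤ e * α := mul_le_mul_of_nonneg_left hαge he.le
        _ < 2*e*α := by nlinarith
    linarith
  have hV : a < (1*α*a + e*β*b) * (α*a) + e*α*a*(β*b) := by
    have expand : (1*α*a + e*β*b)*(α*a) + e*α*a*(β*b) = (α^2*a)*a + (2*e*α)*(β*a*b) := by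
      ring
    rw [expand, hα2]
    have hpos : 0 < β*a*b := by positivity
    nlinarith
  have hfinal : t < expKernelForm ν μ₁ f :=
    lt_of_le_of_lt ha_t (lt_of_lt_of_le hV hlow)
  linarith
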